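/- arXiv:chao-dyn/9910010 — 2 statements merged into one kernel-verified Lean document; each statement's English description precedes it below -/
import Mathlib

section
/- For 0 < δ < 1, ν = (1-√δ)/(1+√δ), and θ ∈ (-1/2, 1/2), one has θ - h_ν(θ) = (2/π) arctan( √δ cos(πθ) / (1 - √δ sin(πθ)) ) and θ - h_{1/ν}(θ) = -(2/π) arctan( √δ cos(πθ) / (1 + √δ sin(πθ)) ). -/
open Real

noncomputable def h (ν θ : ℝ) : ℝ :=
  (2 / π) * arctan (((ν + 1) * tan (π * θ / 2) + (ν - 1)) /
    ((ν - 1) * tan (π * θ / 2) + (ν + 1)))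

/-!
Put `t = tan (π θ / 2)`, so `|t| < 1` and `π θ / 2 = arctan t`. For `ν = (1 - s) / (1 + s)` the
Möbius argument in `h ν θ` is `(t - s) / (1 - s t)`, hence `θ - h ν θ` is `2 / π` times
`arctan t - arctan ((t - s) / (1 - s t))`. The arctangent subtraction formula turns this into a
single arctangent of `s (1 - t²) / (1 + t² - 2 s t)`, which the half-angle substitution
`cos (π θ) = (1 - t²) / (1 + t²)`, `sin (π θ) = 2 t / (1 + t²)` identifies with
`s cos (π θ) / (1 - s sin (π θ))`. Inverting `ν` amounts to replacing `s = √δ` by `-√δ`.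
-/

theorem Real.arctan_sub {x y : ℝ} (h : -1 < x * y) :
    arctan x - arctan y = arctan ((x - y) / (1 + x * y)) := by
  rw [sub_eq_add_neg, ← arctan_neg, arctan_add (by linarith)]
  ring_nf

theorem Real.abs_tan_lt_one {x : ℝ} (hx₁ : -(π / 4) < x) (hx₂ : x < π / 4) :
    |tan x| < 1 := by
  have hpi := pi_pos
  have hx : x ∈ Set.Ioo (-(π / 2)) (π / 2) := ⟨by linarith, by linarith⟩
  rw [abs_lt, ← tan_pi_div_four, ← tan_neg]
  exact ⟨strictMonoOn_tan ⟨by linarith, by linarith⟩ hx hx₁,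
    strictMonoOn_tan hx ⟨by linarith, by linarith⟩ hx₂⟩

theorem h_one_sub_div_one_add {s : ℝ} (hs : 1 + s ≠ 0) (θ : ℝ) :
    h ((1 - s) / (1 + s)) θ =
      (2 / π) * arctan ((tan (π * θ / 2) - s) / (1 - s * tan (π * θ / 2))) := by
  set t := tan (π * θ / 2)
  have hnum : ((1 - s) / (1 + s) + 1) * t + ((1 - s) / (1 + s) - 1) =
      2 * (t - s) / (1 + s) := by
    field_simp; ring
  have hden : ((1 - s) / (1 + s) - 1) * t + ((1 - s) / (1 + s) + 1) =
      2 * (1 - s * t) / (1 + s) := by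
    field_simp; ring
  rw [h, hnum, hden, div_div_div_cancel_right₀ hs, mul_div_mul_left _ _ two_ne_zero]

theorem Real.arctan_sub_arctan_mobius {s t : ℝ} (hs : |s| < 1) (hst : s * t < 1) :
    arctan t - arctan ((t - s) / (1 - s * t)) =
      arctan (s * (1 - t ^ 2) / (1 + t ^ 2 - 2 * s * t)) := by
  obtain ⟨hs₁, hs₂⟩ := abs_lt.mp hs
  have hst' : 1 - s * t ≠ 0 := by linarith
  have hnum : t - (t - s) / (1 - s * t) = s * (1 - t ^ 2) / (1 - s * t) := by
    rw [eq_div_iff hst', sub_mul, div_mul_cancel₀ _ hst']; ring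
  have hden : 1 + t * ((t - s) / (1 - s * t)) = (1 + t ^ 2 - 2 * s * t) / (1 - s * t) := by
    rw [eq_div_iff hst', add_mul, mul_div_assoc', div_mul_cancel₀ _ hst']; ring
  have hprod : -1 < t * ((t - s) / (1 - s * t)) := by
    have : 0 < 1 + t * ((t - s) / (1 - s * t)) := by
      rw [hden]; exact div_pos (by nlinarith [sq_nonneg (t - s)]) (by linarith)
    linarith
  rw [arctan_sub hprod, hnum, hden, div_div_div_cancel_right₀ hst']

theorem theta_sub_h_one_sub_div_one_add {s θ : ℝ} (hs : |s| < 1)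
    (hθ : θ ∈ Set.Ioo (-(1:ℝ)/2) (1/2)) :
    θ - h ((1 - s) / (1 + s)) θ =
      (2 / π) * arctan (s * cos (π * θ) / (1 - s * sin (π * θ))) := by
  obtain ⟨hs₁, hs₂⟩ := abs_lt.mp hs
  obtain ⟨hθ₁, hθ₂⟩ := hθ
  have hpi := pi_pos
  set t := tan (π * θ / 2) with ht
  obtain ⟨ht₁, ht₂⟩ :=
    abs_lt.mp (abs_tan_lt_one (x := π * θ / 2) (by nlinarith) (by nlinarith))
  have harctan : arctan t = π * θ / 2 := arctan_tan (by nlinarith) (by nlinarith)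
  have hcos : cos (π * θ) = (1 - t ^ 2) / (1 + t ^ 2) := by
    have : 0 < cos (π * θ) := cos_pos_of_mem_Ioo ⟨by nlinarith, by nlinarith⟩
    exact cos_eq_two_mul_tan_half_div_one_sub_tan_half_sq _ (by linarith)
  have hsin : sin (π * θ) = 2 * t / (1 + t ^ 2) :=
    sin_eq_two_mul_tan_half_div_one_add_tan_half_sq _
  have hquot : s * cos (π * θ) / (1 - s * sin (π * θ)) =
      s * (1 - t ^ 2) / (1 + t ^ 2 - 2 * s * t) := by
    have : 1 + t ^ 2 ≠ 0 := by positivity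
    rw [hcos, hsin, mul_div_assoc', show 1 - s * (2 * t / (1 + t ^ 2)) =
      (1 + t ^ 2 - 2 * s * t) / (1 + t ^ 2) by field_simp, div_div_div_cancel_right₀ this]
  calc θ - h ((1 - s) / (1 + s)) θ
      = (2 / π) * (arctan t - arctan ((t - s) / (1 - s * t))) := by
        rw [h_one_sub_div_one_add (by linarith), ← ht, mul_sub, harctan]
        field_simp
    _ = (2 / π) * arctan (s * cos (π * θ) / (1 - s * sin (π * θ))) := by
        rw [arctan_sub_arctan_mobius hs (by nlinarith), hquot]

theorem theta_sub_h_eq_general (δ : ℝ) (hδ1 : δ < 1)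
    (θ : ℝ) (hθ : θ ∈ Set.Ioo (-(1:ℝ)/2) (1/2)) :
    θ - h ((1 - Real.sqrt δ) / (1 + Real.sqrt δ)) θ =
      (2 / π) * arctan (Real.sqrt δ * cos (π * θ) / (1 - Real.sqrt δ * sin (π * θ))) ∧
    θ - h (1 / ((1 - Real.sqrt δ) / (1 + Real.sqrt δ))) θ =
      -((2 / π) * arctan (Real.sqrt δ * cos (π * θ) / (1 + Real.sqrt δ * sin (π * θ)))) := by
  have hs : |√δ| < 1 := by
    rw [abs_of_nonneg (sqrt_nonneg δ), sqrt_lt' one_pos]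
    linarith
  refine ⟨theta_sub_h_one_sub_div_one_add hs hθ, ?_⟩
  have hinv : 1 / ((1 - √δ) / (1 + √δ)) = (1 - -√δ) / (1 + -√δ) := by
    rw [one_div_div, sub_neg_eq_add, ← sub_eq_add_neg]
  rw [hinv, theta_sub_h_one_sub_div_one_add (by rwa [abs_neg]) hθ, ← mul_neg, ← arctan_neg]
  congr 2
  ring

theorem theta_sub_h_eq (δ : ℝ) (hδ : 0 < δ) (hδ1 : δ < 1)
    (θ : ℝ) (hθ : θ ∈ Set.Ioo (-(1:ℝ)/2) (1/2)) :
    θ - h ((1 - Real.sqrt δ) / (1 + Real.sqrt δ)) θ =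
      (2 / π) * arctan (Real.sqrt δ * cos (π * θ) / (1 - Real.sqrt δ * sin (π * θ))) ∧
    θ - h (1 / ((1 - Real.sqrt δ) / (1 + Real.sqrt δ))) θ =
      -((2 / π) * arctan (Real.sqrt δ * cos (π * θ) / (1 + Real.sqrt δ * sin (π * θ)))) :=
  theta_sub_h_eq_general δ hδ1 θ hθ
end

section
/- For 0 < δ < 1 and ν = (1-√δ)/(1+√δ), the graph r = χ⁻(θ) = θ - h_{1/ν}(θ) over θ ∈ (-1/2, 1/2) is invariant under the Suris map f_δ, and on this graph f_δ conjugates to h_ν; explicitly, f_δ(θ, χ⁻(θ)) = (h_ν(θ), χ⁻(h_ν(θ))). -/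
/-!
Under `θ ↦ tan (π θ / 2 + π / 4)`, which maps `(-1/2, 1/2)` onto `(0, ∞)`, the map `h ν` becomes
the dilation `y ↦ ν y`. Hence `h (1/ν)` inverts `h ν`, which reduces the second coordinate of the
claim to the first, and the first is the identity `h ν θ + h (1/ν) θ = 2 θ + V'_δ θ`. In the ray
coordinate `y` it splits into `arctan (ν y) + arctan (y / ν) = π / 2 + arctan (κ tan (π θ))` and
`arctan (κ tan x) + arctan (δ sin 2x / (1 + δ cos 2x)) = x`, both instances of the arctan addition
formula, where `κ = 2ν / (1 + ν²) = (1 - δ) / (1 + δ)` exactly because `√δ = (1 - ν) / (1 + ν)`.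
-/

open Real

noncomputable def Vd' (δ θ : ℝ) : ℝ :=
  -(2 / π) * arctan (δ * sin (2 * π * θ) / (1 + δ * cos (2 * π * θ)))

noncomputable def suris (δ : ℝ) (p : ℝ × ℝ) : ℝ × ℝ :=
  (p.1 + p.2 + Vd' δ p.1, p.2 + Vd' δ p.1)

theorem arctan_add_pi_div_four {x : ℝ} (hx : x < 1) :
    arctan x + π / 4 = arctan ((1 + x) / (1 - x)) := by
  rw [← arctan_one, arctan_add (by linarith), mul_one, add_comm x]

theorem tan_add_pi_div_four {x : ℝ} (hx₁ : -(π / 2) < x) (hx₂ : x < π / 4) :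
    tan (x + π / 4) = (1 + tan x) / (1 - tan x) := by
  have htan : tan x < 1 := by
    rw [← tan_pi_div_four]
    exact tan_lt_tan_of_lt_of_lt_pi_div_two hx₁ (by linarith [pi_pos]) hx₂
  have hadd := arctan_add_pi_div_four htan
  rw [arctan_tan hx₁ (by linarith [pi_pos])] at hadd
  rw [hadd, tan_arctan]

theorem arctan_mobius {ν t : ℝ} (hν : 0 < ν) (ht : t ∈ Set.Ioo (-1) 1) :
    arctan (((ν + 1) * t + (ν - 1)) / ((ν - 1) * t + (ν + 1))) =
      arctan (ν * ((1 + t) / (1 - t))) - π / 4 := by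
  obtain ⟨ht₁, ht₂⟩ := ht
  have hden : 0 < (ν - 1) * t + (ν + 1) := by nlinarith
  have hlt : ((ν + 1) * t + (ν - 1)) / ((ν - 1) * t + (ν + 1)) < 1 := by
    rw [div_lt_one hden]; linarith
  rw [eq_sub_iff_add_eq, arctan_add_pi_div_four hlt]
  congr 1
  rw [one_add_div hden.ne', one_sub_div hden.ne', div_div_div_cancel_right₀ hden.ne',
    mul_div_assoc', div_eq_div_iff (by linarith) (by linarith)]
  ring

theorem tan_mem_Ioo_neg_one_one {x : ℝ} (hx : x ∈ Set.Ioo (-(π / 4)) (π / 4)) :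
    tan x ∈ Set.Ioo (-1) 1 := by
  obtain ⟨hx₁, hx₂⟩ := hx
  rw [← tan_pi_div_four, ← tan_neg]
  exact ⟨tan_lt_tan_of_lt_of_lt_pi_div_two (by linarith [pi_pos]) (by linarith [pi_pos]) hx₁,
    tan_lt_tan_of_lt_of_lt_pi_div_two (by linarith [pi_pos]) (by linarith [pi_pos]) hx₂⟩

theorem tan_half_add_pi_div_four_sub_inv (x : ℝ) :
    tan (x / 2 + π / 4) - (tan (x / 2 + π / 4))⁻¹ = 2 * tan x := by
  set w := x / 2 + π / 4
  have hx : x = 2 * w - π / 2 := by simp only [w]; ring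
  rw [hx, tan_eq_sin_div_cos, tan_eq_sin_div_cos, sin_sub_pi_div_two, cos_sub_pi_div_two,
    sin_two_mul, cos_two_mul, ← sin_sq_add_cos_sq w]
  -- at the poles and zeros of `tan w` both sides take the junk value `0`
  rcases eq_or_ne (sin w) 0 with hs | hs
  · simp [hs]
  rcases eq_or_ne (cos w) 0 with hc | hc
  · simp [hc]
  field_simp
  ring

theorem arctan_mul_add_arctan_div {ν y : ℝ} (hν : 0 < ν) (hy : 0 < y) :
    arctan (ν * y) + arctan (y / ν) = π / 2 + arctan (ν * (y - y⁻¹) / (1 + ν ^ 2)) := by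
  have hsub : arctan (ν * y) + arctan (-(ν / y)) = arctan (ν * (y - y⁻¹) / (1 + ν ^ 2)) := by
    rw [arctan_add (by field_simp; nlinarith)]
    congr 1
    rw [mul_neg, sub_neg_eq_add, div_eq_div_iff (by positivity) (by positivity)]
    field_simp
    ring
  rw [← inv_div ν y, arctan_inv_of_pos (by positivity), ← hsub, arctan_neg]
  ring

theorem mul_sin_two_mul_div_one_add_mul_cos_two_mul {x : ℝ} (δ : ℝ) (hx : cos x ≠ 0) :
    δ * sin (2 * x) / (1 + δ * cos (2 * x)) = 2 * δ * tan x / ((1 + δ) + (1 - δ) * tan x ^ 2) := by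
  have hD : (1 + δ) + (1 - δ) * tan x ^ 2 = (1 + δ * cos (2 * x)) / cos x ^ 2 := by
    rw [tan_eq_sin_div_cos, cos_two_mul, eq_div_iff (by positivity)]
    field_simp
    linear_combination (1 - δ) * sin_sq_add_cos_sq x
  rw [hD, div_div_eq_mul_div, tan_eq_sin_div_cos, sin_two_mul]
  field_simp

theorem arctan_mul_add_arctan_eq_arctan {δ : ℝ} (hδ : |δ| < 1) (U : ℝ) :
    arctan ((1 - δ) / (1 + δ) * U) + arctan (2 * δ * U / ((1 + δ) + (1 - δ) * U ^ 2)) =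
      arctan U := by
  obtain ⟨hδ₁, hδ₂⟩ := abs_lt.1 hδ
  have hD : 0 < (1 + δ) + (1 - δ) * U ^ 2 := by
    have : 0 ≤ (1 - δ) * U ^ 2 := mul_nonneg (by linarith) (sq_nonneg U)
    linarith
  have hprod : (1 - δ) / (1 + δ) * U * (2 * δ * U / ((1 + δ) + (1 - δ) * U ^ 2)) < 1 := by
    rw [div_mul_eq_mul_div, div_mul_div_comm, div_lt_one (mul_pos (by linarith) hD)]
    nlinarith [sq_nonneg ((1 - δ) * U)]
  rw [arctan_add hprod]
  congr 1
  have : 1 + δ ≠ 0 := by linarith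
  rw [div_eq_iff (by linarith)]
  field_simp
  ring

theorem arctan_mul_tan_add_arctan {δ x : ℝ} (hδ : |δ| < 1) (hx : x ∈ Set.Ioo (-(π / 2)) (π / 2)) :
    arctan ((1 - δ) / (1 + δ) * tan x) + arctan (δ * sin (2 * x) / (1 + δ * cos (2 * x))) = x := by
  rw [mul_sin_two_mul_div_one_add_mul_cos_two_mul δ (cos_pos_of_mem_Ioo hx).ne',
    arctan_mul_add_arctan_eq_arctan hδ, arctan_tan hx.1 hx.2]

noncomputable def rayCoord (θ : ℝ) : ℝ := tan (π * θ / 2 + π / 4)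

noncomputable def rayCoordInv (y : ℝ) : ℝ := 2 / π * arctan y - 1 / 2

theorem pi_mul_div_two_add_pi_div_four_mem_Ioo {θ : ℝ} (hθ : θ ∈ Set.Ioo (-1 / 2 : ℝ) (1 / 2)) :
    π * θ / 2 + π / 4 ∈ Set.Ioo 0 (π / 2) := by
  obtain ⟨hθ₁, hθ₂⟩ := hθ
  constructor <;> nlinarith [pi_pos]

theorem rayCoord_pos {θ : ℝ} (hθ : θ ∈ Set.Ioo (-1 / 2 : ℝ) (1 / 2)) : 0 < rayCoord θ :=
  have hmem := pi_mul_div_two_add_pi_div_four_mem_Ioo hθ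
  tan_pos_of_pos_of_lt_pi_div_two hmem.1 hmem.2

theorem rayCoordInv_rayCoord {θ : ℝ} (hθ : θ ∈ Set.Ioo (-1 / 2 : ℝ) (1 / 2)) :
    rayCoordInv (rayCoord θ) = θ := by
  have hmem := pi_mul_div_two_add_pi_div_four_mem_Ioo hθ
  rw [rayCoordInv, rayCoord, arctan_tan (by linarith [hmem.1, pi_pos]) hmem.2]
  field_simp
  ring

theorem rayCoord_rayCoordInv (y : ℝ) : rayCoord (rayCoordInv y) = y := by
  rw [rayCoord, rayCoordInv, show π * (2 / π * arctan y - 1 / 2) / 2 + π / 4 = arctan y by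
    field_simp; ring, tan_arctan]

theorem rayCoordInv_mem_Ioo {y : ℝ} (hy : 0 < y) : rayCoordInv y ∈ Set.Ioo (-1 / 2 : ℝ) (1 / 2) := by
  have h₀ : 0 < arctan y := arctan_pos.2 hy
  have h₁ : arctan y < π / 2 := arctan_lt_pi_div_two y
  rw [rayCoordInv]
  constructor
  · have : 0 < 2 / π * arctan y := by positivity
    linarith
  · have : 2 / π * arctan y < 1 := by
      rw [div_mul_eq_mul_div, div_lt_one pi_pos]; linarith
    linarith

theorem h_eq_rayCoordInv {ν θ : ℝ} (hν : 0 < ν) (hθ : θ ∈ Set.Ioo (-1 / 2 : ℝ) (1 / 2)) :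
    h ν θ = rayCoordInv (ν * rayCoord θ) := by
  have hφ : π * θ / 2 ∈ Set.Ioo (-(π / 4)) (π / 4) := by
    obtain ⟨hθ₁, hθ₂⟩ := hθ
    constructor <;> nlinarith [pi_pos]
  rw [h, arctan_mobius hν (tan_mem_Ioo_neg_one_one hφ), rayCoordInv, rayCoord,
    tan_add_pi_div_four (by linarith [pi_pos, hφ.1]) hφ.2]
  field_simp
  ring

theorem h_mem_Ioo {ν θ : ℝ} (hν : 0 < ν) (hθ : θ ∈ Set.Ioo (-1 / 2 : ℝ) (1 / 2)) :
    h ν θ ∈ Set.Ioo (-1 / 2 : ℝ) (1 / 2) := by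
  rw [h_eq_rayCoordInv hν hθ]
  exact rayCoordInv_mem_Ioo (mul_pos hν (rayCoord_pos hθ))

theorem h_one_div_h {ν θ : ℝ} (hν : 0 < ν) (hθ : θ ∈ Set.Ioo (-1 / 2 : ℝ) (1 / 2)) :
    h (1 / ν) (h ν θ) = θ := by
  rw [h_eq_rayCoordInv (one_div_pos.2 hν) (h_mem_Ioo hν hθ), h_eq_rayCoordInv hν hθ,
    rayCoord_rayCoordInv, one_div, inv_mul_cancel_left₀ hν.ne', rayCoordInv_rayCoord hθ]

theorem h_add_h_one_div {ν θ : ℝ} (hν : 0 < ν) (hθ : θ ∈ Set.Ioo (-1 / 2 : ℝ) (1 / 2)) :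
    h ν θ + h (1 / ν) θ = 2 * θ + Vd' (((1 - ν) / (1 + ν)) ^ 2) θ := by
  set δ := ((1 - ν) / (1 + ν)) ^ 2
  have hδ : |δ| < 1 := by
    rw [abs_of_nonneg (sq_nonneg _), sq_lt_one_iff_abs_lt_one, abs_lt,
      lt_div_iff₀ (by linarith), div_lt_one (by linarith)]
    constructor <;> linarith
  have hκ : (1 - δ) / (1 + δ) = 2 * ν / (1 + ν ^ 2) := by
    rw [div_eq_div_iff (by positivity) (by positivity)]
    simp only [δ]
    field_simp
    ring
  have hx : π * θ ∈ Set.Ioo (-(π / 2)) (π / 2) := by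
    obtain ⟨hθ₁, hθ₂⟩ := hθ
    constructor <;> nlinarith [pi_pos]
  set y := rayCoord θ
  have hsum : arctan (ν * y) + arctan (y / ν) =
      π / 2 + arctan ((1 - δ) / (1 + δ) * tan (π * θ)) := by
    rw [arctan_mul_add_arctan_div hν (rayCoord_pos hθ), rayCoord,
      tan_half_add_pi_div_four_sub_inv, hκ]
    congr 2
    ring
  have hVd := arctan_mul_tan_add_arctan hδ hx
  rw [← mul_assoc] at hVd
  rw [h_eq_rayCoordInv hν hθ, h_eq_rayCoordInv (one_div_pos.2 hν) hθ, Vd']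
  calc rayCoordInv (ν * y) + rayCoordInv (1 / ν * y)
      = 2 / π * (arctan (ν * y) + arctan (y / ν)) - 1 := by
        rw [rayCoordInv, rayCoordInv, one_div_mul_eq_div]; ring
    _ = _ := by
        rw [hsum, eq_sub_of_add_eq hVd]
        field_simp
        ring

theorem chi_minus_invariant (δ : ℝ) (hδ : 0 < δ) (hδ1 : δ < 1)
    (θ : ℝ) (hθ : θ ∈ Set.Ioo (-(1:ℝ)/2) (1/2)) :
    suris δ (θ, θ - h (1 / ((1 - Real.sqrt δ) / (1 + Real.sqrt δ))) θ) =
      (h ((1 - Real.sqrt δ) / (1 + Real.sqrt δ)) θ,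
       h ((1 - Real.sqrt δ) / (1 + Real.sqrt δ)) θ
         - h (1 / ((1 - Real.sqrt δ) / (1 + Real.sqrt δ)))
             (h ((1 - Real.sqrt δ) / (1 + Real.sqrt δ)) θ)) := by
  have hsqrt : Real.sqrt δ < 1 := (Real.sqrt_lt' one_pos).2 (by rwa [one_pow])
  set ν := (1 - Real.sqrt δ) / (1 + Real.sqrt δ)
  have hν : 0 < ν := div_pos (by linarith) (by positivity)
  have hδν : ((1 - ν) / (1 + ν)) ^ 2 = δ := by
    have : (1 - ν) / (1 + ν) = Real.sqrt δ := by
      simp only [ν]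
      field_simp
      ring
    rw [this, Real.sq_sqrt hδ.le]
  have hadd := h_add_h_one_div hν hθ
  rw [hδν] at hadd
  rw [h_one_div_h hν hθ, suris]
  ext <;> dsimp only <;> linarith
end
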